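/- arXiv:1501.02534 — 2 statements merged into one kernel-verified Lean document; each statement's English description precedes it below -/
import Mathlib

section
/- Let B be the unweighted unilateral backward shift on ℓ²(ℕ) (B e₀ = 0, B eₙ = e_{n−1}) and M = { (xₙ)ₙ≥0 ∈ ℓ²(ℕ) : x_{2n} = 0 for all n }. Then 2B is M-hypercyclic, but (2B)* = 2F, where F is the unilateral forward shift, is not M^⊥-hypercyclic. Hence M-transitivity of T does not imply M^⊥-transitivity of T*. -/
open Filter Finset Topology

noncomputable section

/-- `U` is a nonempty relatively open subset of `M`. -/
def RelOpenIn {H : Type*} [NormedAddCommGroup H] (M U : Set H) : Prop :=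
  U ⊆ M ∧ ∃ W : Set H, IsOpen W ∧ U = W ∩ M

/-- `T` is `M`-transitive: for each pair of nonempty relatively open subsets `U₁, U₂` of `M`
there is `n` such that `T⁻ⁿ U₁ ∩ U₂` contains a nonempty relatively open subset of `M`. -/
def SubspaceTransitive {H : Type*} [NormedAddCommGroup H] [NormedSpace ℂ H]
    (T : H →L[ℂ] H) (M : Set H) : Prop :=
  ∀ U₁ U₂ : Set H, RelOpenIn M U₁ → RelOpenIn M U₂ → U₁.Nonempty → U₂.Nonempty →
    ∃ n : ℕ, ∃ V : Set H, V.Nonempty ∧ RelOpenIn M V ∧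
      V ⊆ (⇑(T ^ n)) ⁻¹' U₁ ∩ U₂

/-- `T` is `M`-hypercyclic: some orbit meets `M` in a dense subset of `M`. -/
def SubspaceHypercyclic {H : Type*} [NormedAddCommGroup H] [NormedSpace ℂ H]
    (T : H →L[ℂ] H) (M : Set H) : Prop :=
  ∃ x : H, M ⊆ closure ((Set.range fun n : ℕ => (T ^ n) x) ∩ M)

/-- The Hilbert space `ℓ²(ℕ)`. -/
abbrev HN : Type := lp (fun _ : ℕ => ℂ) 2

/-- The standard orthonormal basis vectors of `ℓ²(ℕ)`. -/
def e (n : ℕ) : HN := lp.single 2 n (1 : ℂ)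

open scoped ENNReal


def coord (k : ℕ) : HN →L[ℂ] ℂ :=
  LinearMap.mkContinuous
    { toFun := fun x => x k
      map_add' := fun x y => by simp
      map_smul' := fun c x => by simp }
    1 (fun x => by show ‖x k‖ ≤ 1 * ‖x‖; simpa using lp.norm_apply_le_norm (by norm_num : (2:ℝ≥0∞) ≠ 0) x k)

@[simp] lemma coord_apply (k : ℕ) (x : HN) : coord k x = x k := rfl

lemma e_apply (n k : ℕ) : (e n) k = if k = n then 1 else 0 := by
  rw [e, lp.single_apply]; split <;> simp_all

lemma inner_e (k : ℕ) (x : HN) : inner ℂ (e k) x = x k := by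
  rw [e, lp.inner_single_left]; simp

lemma single_eq_smul_e (n : ℕ) (c : ℂ) : lp.single 2 n c = c • e n := by
  rw [e, ← lp.single_smul]; simp

section B
variable (B : HN →L[ℂ] HN) (hB0 : B (e 0) = 0) (hB : ∀ n : ℕ, B (e (n + 1)) = e n)
include hB0 hB

lemma B_coord (x : HN) (k : ℕ) : B x k = x (k + 1) := by
  have hs : HasSum (fun n => lp.single 2 n (x n)) x :=
    lp.hasSum_single (by norm_num) x
  have h2 : HasSum (fun n => coord k (B (lp.single 2 n (x n)))) (coord k (B x)) :=
    ((coord k).comp B).hasSum hs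
  have key : ∀ n : ℕ, coord k (B (lp.single 2 n (x n))) = if n = k + 1 then x (k+1) else 0 := by
    intro n
    rw [single_eq_smul_e, map_smul, map_smul]
    match n with
    | 0 => simp [hB0]
    | m + 1 =>
      rw [hB m]
      simp only [coord_apply, smul_eq_mul, e_apply]
      by_cases h : m = k
      · subst h; simp
      · simp [h, Ne.symm h, show ¬(m + 1 = k + 1) from fun hh => h (by omega)]
  have h3 : HasSum (fun n => coord k (B (lp.single 2 n (x n)))) (x (k+1)) := by
    simpa only [key] using hasSum_ite_eq (k+1) (x (k+1))
  exact h2.unique h3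

end B
section Adj
variable (B : HN →L[ℂ] HN)

def Aop : HN →L[ℂ] HN := ContinuousLinearMap.adjoint ((2:ℂ) • B)

variable (hB0 : B (e 0) = 0) (hB : ∀ n : ℕ, B (e (n + 1)) = e n)
include hB0 hB

lemma A_coord0 (x : HN) : Aop B x 0 = 0 := by
  have : inner ℂ (e 0) (Aop B x) = inner ℂ (((2:ℂ) • B) (e 0)) x :=
    ContinuousLinearMap.adjoint_inner_right _ _ _
  rw [inner_e] at this
  rw [this, ContinuousLinearMap.smul_apply, hB0, smul_zero, inner_zero_left]

lemma A_coordS (x : HN) (k : ℕ) : Aop B x (k+1) = 2 * x k := by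
  have : inner ℂ (e (k+1)) (Aop B x) = inner ℂ (((2:ℂ) • B) (e (k+1))) x :=
    ContinuousLinearMap.adjoint_inner_right _ _ _
  rw [inner_e] at this
  rw [this, ContinuousLinearMap.smul_apply, hB k, inner_smul_left, inner_e,
    Complex.conj_ofNat]

lemma BA (x : HN) : ((2:ℂ) • B) (Aop B x) = (4:ℂ) • x := by
  apply lp.ext; funext k
  have h1 : (((2:ℂ) • B) (Aop B x)) k = 2 * (B (Aop B x) k) := by
    rw [ContinuousLinearMap.smul_apply, lp.coeFn_smul]; simp
  rw [h1, B_coord B hB0 hB, A_coordS B hB0 hB, lp.coeFn_smul]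
  simp; ring

lemma norm_A (x : HN) : ‖Aop B x‖ = 2 * ‖x‖ := by
  have h1 : inner ℂ (Aop B x) (Aop B x) = inner ℂ x (((2:ℂ) • B) (Aop B x)) :=
    ContinuousLinearMap.adjoint_inner_left _ _ _
  rw [BA B hB0 hB, inner_smul_right] at h1
  have h3 : ‖Aop B x‖^2 = 4 * ‖x‖^2 := by
    rw [norm_sq_eq_re_inner (𝕜 := ℂ), norm_sq_eq_re_inner (𝕜 := ℂ), h1]
    simp [Complex.mul_re]
  nlinarith [norm_nonneg (Aop B x), norm_nonneg x]

lemma norm_Apow (n : ℕ) (x : HN) : ‖((Aop B)^n) x‖ = 2^n * ‖x‖ := by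
  induction n generalizing x with
  | zero => simp
  | succ n ih =>
    rw [pow_succ, ContinuousLinearMap.mul_apply, ih, norm_A B hB0 hB]
    ring

lemma Bpow_coord (m : ℕ) (x : HN) (k : ℕ) : ((B^m) x) k = x (k + m) := by
  induction m generalizing x k with
  | zero => simp
  | succ m ih =>
    rw [pow_succ, ContinuousLinearMap.mul_apply, ih, B_coord B hB0 hB]
    congr 1

lemma Apow_coord (m : ℕ) (x : HN) (k : ℕ) :
    (((Aop B)^m) x) k = if k < m then 0 else 2^m * x (k - m) := by
  induction m generalizing x k with
  | zero => simp
  | succ m ih =>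
    rw [pow_succ', ContinuousLinearMap.mul_apply]
    match k with
    | 0 => simp [A_coord0 B hB0 hB]
    | k + 1 =>
      rw [A_coordS B hB0 hB, ih]
      by_cases h : k < m
      · simp [h, if_pos (by omega : k + 1 < m + 1)]
      · rw [if_neg h, if_neg (by omega : ¬ k + 1 < m + 1)]
        have : k + 1 - (m + 1) = k - m := by omega
        rw [this]; ring

lemma TA_pow (a : ℕ) (z : HN) :
    ((((2:ℂ) • B))^a) (((Aop B)^a) z) = ((4:ℂ)^a) • z := by
  induction a generalizing z with
  | zero => simp
  | succ a ih =>
    rw [pow_succ' ((2:ℂ) • B), ContinuousLinearMap.mul_apply,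
      pow_succ (Aop B), ContinuousLinearMap.mul_apply, ih, map_smul, BA B hB0 hB,
      smul_smul, pow_succ]

lemma T_pow_A_pow (a b : ℕ) (h : a ≤ b) (z : HN) :
    ((((2:ℂ) • B))^a) (((Aop B)^b) z) = ((4:ℂ)^a) • ((Aop B)^(b - a)) z := by
  obtain ⟨c, rfl⟩ := Nat.exists_eq_add_of_le h
  have hc : a + c - a = c := by omega
  rw [hc, pow_add (Aop B), ContinuousLinearMap.mul_apply, TA_pow B hB0 hB]

lemma Tn_coord (n : ℕ) (x : HN) (k : ℕ) :
    ((((2:ℂ) • B)^n) x) k = 2^n * x (k + n) := by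
  rw [smul_pow, ContinuousLinearMap.smul_apply, lp.coeFn_smul, Pi.smul_apply,
    Bpow_coord B hB0 hB, smul_eq_mul]

end Adj
lemma norm_single' (i : ℕ) (c : ℂ) : ‖(lp.single 2 i c : HN)‖ = ‖c‖ :=
  lp.norm_single (E := fun _ : ℕ => ℂ) (p := 2) (by norm_num) i c

lemma single_sub (i : ℕ) (a b : ℂ) :
    (lp.single 2 i (a - b) : HN) = lp.single 2 i a - lp.single 2 i b := by
  apply lp.ext; funext j
  by_cases h : j = i <;> simp [lp.single_apply, h]

def trunc (N : ℕ) (m : HN) : HN := ∑ i ∈ Finset.range N, lp.single 2 i (m i)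

lemma trunc_coord (N : ℕ) (m : HN) (k : ℕ) : trunc N m k = if k < N then m k else 0 := by
  simp only [trunc, lp.coeFn_sum, Finset.sum_apply, lp.single_apply, Pi.single_apply, Finset.sum_ite_eq,
    Finset.mem_range]

lemma trunc_tendsto (m : HN) : Filter.Tendsto (fun N => trunc N m) Filter.atTop (nhds m) :=
  (lp.hasSum_single (by norm_num) m).tendsto_sum_nat

def truncQ (L : List ℂ) : HN := ∑ i ∈ Finset.range L.length, lp.single 2 i (L.getD i 0)

lemma tsum_coord {f : ℕ → HN} (hf : Summable f) (k : ℕ) :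
    (∑' j, f j) k = ∑' j, f j k := by
  simpa using (coord k).map_tsum hf

instance : TopologicalSpace.SeparableSpace HN := by
  obtain ⟨C, hCc, hCd⟩ := TopologicalSpace.exists_countable_dense ℂ
  haveI := hCc.to_subtype
  refine ⟨⟨Set.range (fun l : List C => truncQ (l.map Subtype.val)),
    Set.countable_range _, ?_⟩⟩
  rw [Metric.dense_iff]
  intro x r hr
  have ht := trunc_tendsto x
  rw [Metric.tendsto_atTop] at ht
  obtain ⟨N, hN⟩ := ht (r/2) (by positivity)
  have hq : ∀ i : ℕ, ∃ c : ℂ, c ∈ C ∧ dist (x i) c < r / (2 * (N+1)) := by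
    intro i
    have h1 := Metric.mem_closure_iff.1 (hCd (x i)) (r / (2 * (N+1))) (by positivity)
    obtain ⟨b, hb, hbd⟩ := h1
    exact ⟨b, hb, hbd⟩
  choose q hqC hqd using hq
  set l : List C := List.ofFn (fun i : Fin N => (⟨q i, hqC i⟩ : C)) with hl
  set L : List ℂ := l.map Subtype.val with hL
  have hLlen : L.length = N := by simp [hL, hl]
  have hLget : ∀ i : ℕ, i < N → L.getD i 0 = q i := by
    intro i hi
    rw [List.getD_eq_getElem L 0 (by omega)]
    simp [hL, hl, List.getElem_map, List.getElem_ofFn]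
  refine ⟨truncQ L, Metric.mem_ball.2 ?_, Set.mem_range_self l⟩
  have key : dist (truncQ L) (trunc N x) ≤ N * (r / (2 * (N+1))) := by
    rw [dist_eq_norm]
    have : truncQ L - trunc N x = ∑ i ∈ Finset.range N, lp.single 2 i (L.getD i 0 - x i) := by
      rw [truncQ, hLlen, trunc, ← Finset.sum_sub_distrib]
      exact Finset.sum_congr rfl fun i _ => (single_sub i _ _).symm
    rw [this]
    calc ‖∑ i ∈ Finset.range N, (lp.single 2 i (L.getD i 0 - x i) : HN)‖
        ≤ ∑ i ∈ Finset.range N, ‖(lp.single 2 i (L.getD i 0 - x i) : HN)‖ := norm_sum_le _ _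
      _ ≤ ∑ _i ∈ Finset.range N, (r / (2 * (N+1))) := by
          refine Finset.sum_le_sum fun i hi => ?_
          rw [norm_single', hLget i (Finset.mem_range.1 hi)]
          have := hqd i
          rw [dist_eq_norm] at this
          rw [norm_sub_rev]
          exact this.le
      _ = N * (r / (2 * (N+1))) := by
          rw [Finset.sum_const, Finset.card_range, nsmul_eq_mul]
  have h2 : (N : ℝ) * (r / (2 * (N+1))) < r / 2 := by
    have hpos : (0:ℝ) < 2 * ((N:ℝ)+1) := by positivity
    rw [← mul_div_assoc, div_lt_div_iff₀ hpos (by norm_num : (0:ℝ) < 2)]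
    nlinarith [Nat.cast_nonneg (α := ℝ) N, hr]
  calc dist (truncQ L) x ≤ dist (truncQ L) (trunc N x) + dist (trunc N x) x := dist_triangle _ _ _
    _ < r / 2 + r / 2 := by
        have := hN N le_rfl
        exact add_lt_add (key.trans_lt h2) this
    _ = r := by ring
def PM (x : HN) : Prop := ∀ n : ℕ, x (2 * n) = 0

lemma PM_zero : PM 0 := fun n => by simp

lemma PM_add {x y : HN} (hx : PM x) (hy : PM y) : PM (x + y) := fun n => by
  simp [lp.coeFn_add, hx n, hy n]

lemma PM_smul {x : HN} (c : ℂ) (hx : PM x) : PM (c • x) := fun n => by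
  simp [lp.coeFn_smul, hx n]

lemma PM_tsum {f : ℕ → HN} (hf : Summable f) (h : ∀ j, PM (f j)) : PM (∑' j, f j) := by
  intro n
  rw [tsum_coord hf]
  simp [fun j => h j n]

section Bs
variable (B : HN →L[ℂ] HN) (hB0 : B (e 0) = 0) (hB : ∀ n : ℕ, B (e (n + 1)) = e n)
include hB0 hB

lemma PM_Apow_even {m : ℕ} (hm : Even m) {y : HN} (hy : PM y) :
    PM (((Aop B)^m) y) := by
  intro n
  rw [Apow_coord B hB0 hB]
  split
  · rfl
  · rename_i hlt
    obtain ⟨t, rfl⟩ := hm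
    have h2 : t + t - (2 * n) = 0 ∨ ∃ s, 2 * n - (t + t) = 2 * s := by
      rcases le_or_gt (t + t) (2 * n) with h | h
      · exact Or.inr ⟨n - t + (n - n), by omega⟩
      · omega
    rcases h2 with h2 | ⟨s, hs⟩
    · have : 2 * n - (t + t) = 2 * (n - t) := by omega
      rw [this, hy]; ring
    · rw [hs, hy]; ring

lemma PM_Tpow_even {m : ℕ} (hm : Even m) {y : HN} (hy : PM y) :
    PM (((((2:ℂ) • B))^m) y) := by
  intro n
  rw [Tn_coord B hB0 hB]
  obtain ⟨t, rfl⟩ := hm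
  have : 2 * n + (t + t) = 2 * (n + t) := by omega
  rw [this, hy]; ring

lemma T_pow_eq_zero {n N : ℕ} (hN : N ≤ n) {y : HN} (hy : ∀ i, N ≤ i → y i = 0) :
    ((((2:ℂ) • B))^n) y = 0 := by
  apply lp.ext; funext k
  rw [Tn_coord B hB0 hB, hy (k + n) (by omega)]
  simp

end Bs

lemma exists_trunc {m : HN} (hm : PM m) {δ : ℝ} (hδ : 0 < δ) :
    ∃ (y : HN) (N : ℕ), PM y ∧ (∀ i, N ≤ i → y i = 0) ∧ ‖y - m‖ < δ := by
  have ht := trunc_tendsto m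
  rw [Metric.tendsto_atTop] at ht
  obtain ⟨N, hN⟩ := ht δ hδ
  refine ⟨trunc N m, N, ?_, ?_, ?_⟩
  · intro n; rw [trunc_coord]; split
    · exact hm n
    · rfl
  · intro i hi; rw [trunc_coord, if_neg (by omega)]
  · have := hN N le_rfl
    rwa [dist_eq_norm] at this

lemma geom_tail (k : ℕ) : ∑' j : ℕ, (if j ≤ k then (0:ℝ) else (2⁻¹)^j) = (2⁻¹)^k := by
  have hfull : HasSum (fun j : ℕ => ((2:ℝ)⁻¹)^j) 2 := by
    have := hasSum_geometric_of_lt_one (r := (2:ℝ)⁻¹) (by norm_num) (by norm_num)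
    have h2 : ((1:ℝ) - 2⁻¹)⁻¹ = 2 := by norm_num
    rwa [h2] at this
  have hhead : HasSum (fun j : ℕ => (if j ≤ k then ((2:ℝ)⁻¹)^j else 0))
      (2 - (2⁻¹)^k) := by
    have h1 : HasSum (fun j : ℕ => (if j ≤ k then ((2:ℝ)⁻¹)^j else 0))
        (∑ j ∈ Finset.range (k+1), if j ≤ k then ((2:ℝ)⁻¹)^j else 0) := by
      apply hasSum_sum_of_ne_finset_zero
      intro j hj
      rw [if_neg (by simp at hj; omega)]
    have h2 : (∑ j ∈ Finset.range (k+1), if j ≤ k then ((2:ℝ)⁻¹)^j else 0)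
        = 2 - (2⁻¹)^k := by
      rw [Finset.sum_congr rfl (fun j hj => if_pos (by simp at hj; omega))]
      rw [geom_sum_eq (by norm_num), pow_succ]
      field_simp
      ring
    rwa [h2] at h1
  have hsub := hfull.sub hhead
  have heq : (fun j : ℕ => ((2:ℝ)⁻¹)^j - (if j ≤ k then ((2:ℝ)⁻¹)^j else 0))
      = (fun j : ℕ => (if j ≤ k then (0:ℝ) else (2⁻¹)^j)) := by
    funext j; split <;> simp
  rw [heq] at hsub
  rw [hsub.tsum_eq]
  ring
section Main
variable (B : HN →L[ℂ] HN) (hB0 : B (e 0) = 0) (hB : ∀ n : ℕ, B (e (n + 1)) = e n)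
include hB0 hB

set_option maxHeartbeats 1000000 in
lemma main_hc : ∃ x : HN, ∀ m : HN, PM m → ∀ ε : ℝ, 0 < ε →
    ∃ n : ℕ, PM ((((2:ℂ) • B)^n) x) ∧ ‖(((2:ℂ) • B)^n) x - m‖ < ε := by
  classical
  set Mset : Set HN := {z | PM z} with hMset
  haveI : TopologicalSpace.SeparableSpace ↥Mset :=
    (TopologicalSpace.IsSeparable.of_separableSpace Mset).separableSpace
  haveI : Nonempty ↥Mset := ⟨⟨0, PM_zero⟩⟩
  set u : ℕ → ↥Mset := TopologicalSpace.denseSeq ↥Mset with hu_def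
  have hu : DenseRange u := TopologicalSpace.denseRange_denseSeq ↥Mset
  set d : ℕ → HN := fun k => (u (Nat.unpair k).1 : HN) with hd_def
  have hdPM : ∀ k, PM (d k) := fun k => (u (Nat.unpair k).1).2
  have hdense : ∀ (m : HN), PM m → ∀ ε : ℝ, 0 < ε → ∀ K : ℕ,
      ∃ k, K ≤ k ∧ ‖d k - m‖ < ε := by
    intro m hm ε hε K
    have hmem : (⟨m, hm⟩ : ↥Mset) ∈ closure (Set.range u) := by
      rw [hu.closure_range]; trivial
    obtain ⟨b, ⟨i, rfl⟩, hbd⟩ := Metric.mem_closure_iff.1 hmem ε hε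
    refine ⟨Nat.pair i K, Nat.right_le_pair i K, ?_⟩
    have hdk : d (Nat.pair i K) = (u i : HN) := by rw [hd_def]; simp [Nat.unpair_pair]
    rw [Subtype.dist_eq, dist_eq_norm] at hbd
    rw [hdk, norm_sub_rev]
    exact hbd
  have hyc : ∀ k : ℕ, ∃ y : HN, ∃ N : ℕ, PM y ∧ (∀ i, N ≤ i → y i = 0) ∧
      ‖y - d k‖ < (2⁻¹:ℝ)^k := by
    intro k
    obtain ⟨yy, N, h1, h2, h3⟩ := exists_trunc (hdPM k) (δ := (2⁻¹:ℝ)^k) (by positivity)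
    exact ⟨yy, N, h1, h2, h3⟩
  choose y N hyPM hysupp hyclose using hyc
  have hgc : ∀ k : ℕ, ∃ gg : ℕ, ‖y k‖ + 1 ≤ 2^gg := fun k => by
    obtain ⟨gg, hgg⟩ := pow_unbounded_of_one_lt (‖y k‖ + 1) (by norm_num : (1:ℝ) < 2)
    exact ⟨gg, hgg.le⟩
  choose g hg using hgc
  obtain ⟨nn, hnn0, hnnS⟩ : ∃ nn : ℕ → ℕ, nn 0 = 0 ∧
      ∀ k, nn (k+1) = nn k + 2 * (N k + k + 1 + g (k+1)) :=
    ⟨fun k => Nat.rec 0 (fun k ih => ih + 2 * (N k + k + 1 + g (k+1))) k, rfl, fun k => rfl⟩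
  have hnn_mono : StrictMono nn := strictMono_nat_of_lt_succ (fun k => by rw [hnnS]; omega)
  have hnn_even : ∀ k, Even (nn k) := by
    intro k; induction k with
    | zero => simp [hnn0]
    | succ k ih => rw [hnnS]; exact ih.add (even_two_mul _)
  have hnnN : ∀ j k : ℕ, j < k → nn j + N j ≤ nn k := by
    intro j k hjk
    have h1 : nn j + N j ≤ nn (j+1) := by rw [hnnS]; omega
    exact h1.trans (hnn_mono.monotone hjk)
  have hgrow : ∀ j : ℕ, (‖y (j+1)‖ + 1) * 2^(j+1) * (2:ℝ)^(nn j) ≤ (2:ℝ)^(nn (j+1)) := by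
    intro j
    rw [hnnS, show (2:ℝ)^(nn j + 2*(N j + j + 1 + g (j+1)))
      = 2^(nn j) * 2^(2*(N j + j + 1 + g (j+1))) from pow_add 2 _ _]
    have h2 : (‖y (j+1)‖ + 1) ≤ (2:ℝ)^(g (j+1)) := hg (j+1)
    have h3 : (2:ℝ)^(g (j+1)) * 2^(j+1) ≤ 2^(2 * (N j + j + 1 + g (j+1))) := by
      rw [← pow_add]
      apply pow_le_pow_right₀ (by norm_num : (1:ℝ) ≤ 2)
      omega
    have h1 : (‖y (j+1)‖ + 1) * 2^(j+1) ≤ (2:ℝ)^(2 * (N j + j + 1 + g (j+1))) :=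
      le_trans (mul_le_mul_of_nonneg_right h2 (by positivity)) h3
    calc (‖y (j+1)‖+1) * 2^(j+1) * (2:ℝ)^(nn j)
        ≤ 2^(2*(N j + j + 1 + g (j+1))) * 2^(nn j) :=
          mul_le_mul_of_nonneg_right h1 (by positivity)
      _ = 2^(nn j) * 2^(2*(N j+j+1+g (j+1))) := mul_comm _ _
  have hterm : ∀ k j : ℕ, k < j → (2:ℝ)^(nn k) * ‖y j‖ * 2^j ≤ (2:ℝ)^(nn j) := by
    intro k j hkj
    obtain ⟨i, rfl⟩ : ∃ i, j = i + 1 := ⟨j - 1, by omega⟩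
    have h0 : (2:ℝ)^(nn k) ≤ 2^(nn i) :=
      pow_le_pow_right₀ (by norm_num : (1:ℝ) ≤ 2) (hnn_mono.monotone (by omega))
    have h1 := hgrow i
    have h2 : (2:ℝ)^(nn k) * ‖y (i+1)‖ * 2^(i+1) ≤ (‖y (i+1)‖+1) * 2^(i+1) * 2^(nn i) := by
      have hY := norm_nonneg (y (i+1))
      have hp : (0:ℝ) < 2^(i+1) := by positivity
      have hq : (0:ℝ) < 2^(nn k) := by positivity
      nlinarith [mul_le_mul_of_nonneg_right h0 hY, mul_pos hp hq]
    exact h2.trans h1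
  set t : ℕ → HN := fun j => ((4:ℂ)^(nn j))⁻¹ • ((Aop B ^ (nn j)) (y j)) with ht_def
  have h4pow : ∀ mm : ℕ, (4:ℝ)^mm = 2^mm * 2^mm := fun mm => by
    rw [show (4:ℝ) = 2 * 2 by norm_num, mul_pow]
  have hnt : ∀ j, ‖t j‖ = ‖y j‖ / 2^(nn j) := by
    intro j
    rw [ht_def]
    simp only [norm_smul, norm_inv, norm_pow]
    rw [norm_Apow B hB0 hB]
    have h44 : ‖(4:ℂ)‖ = 4 := by norm_num
    rw [h44, h4pow]
    have hp : (0:ℝ) < 2^(nn j) := by positivity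
    field_simp
  have htb : ∀ j, ‖t j‖ ≤ (‖y 0‖ + 1) * (2⁻¹:ℝ)^j := by
    intro j
    rw [hnt]
    have hY0 : (1:ℝ) ≤ ‖y 0‖ + 1 := by linarith [norm_nonneg (y 0)]
    match j with
    | 0 =>
      rw [hnn0]
      simp only [pow_zero, mul_one]
      rw [div_one]
      linarith [norm_nonneg (y 0)]
    | i+1 =>
      have h1 := hterm 0 (i+1) (by omega)
      rw [hnn0, pow_zero, one_mul] at h1
      have h2 : ‖y (i+1)‖ / 2^(nn (i+1)) ≤ (2⁻¹:ℝ)^(i+1) := by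
        rw [div_le_iff₀ (by positivity : (0:ℝ) < 2^(nn (i+1)))]
        have heq : ((2:ℝ)⁻¹)^(i+1) * 2^(nn (i+1)) = 2^(nn (i+1)) / 2^(i+1) := by
          rw [inv_pow]; ring
        rw [heq, le_div_iff₀ (by positivity : (0:ℝ) < 2^(i+1))]
        linarith [h1]
      calc ‖y (i+1)‖ / 2^(nn (i+1)) ≤ (2⁻¹:ℝ)^(i+1) := h2
        _ ≤ (‖y 0‖ + 1) * (2⁻¹:ℝ)^(i+1) := le_mul_of_one_le_left (by positivity) hY0
  have hgeom : Summable (fun j : ℕ => ((2:ℝ)⁻¹)^j) :=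
    summable_geometric_of_lt_one (by norm_num) (by norm_num)
  have htsum : Summable t :=
    Summable.of_norm_bounded (hgeom.mul_left (‖y 0‖ + 1)) htb
  set x : HN := ∑' j, t j with hx_def
  refine ⟨x, ?_⟩
  intro m hm ε hε
  obtain ⟨K, hK⟩ := exists_pow_lt_of_lt_one (show (0:ℝ) < ε/4 by positivity)
    (show (2⁻¹:ℝ) < 1 by norm_num)
  obtain ⟨k, hkK, hdk⟩ := hdense m hm (ε/4) (by positivity) K
  have hhalfk : ((2:ℝ)⁻¹)^k < ε/4 :=
    lt_of_le_of_lt (pow_le_pow_of_le_one (by norm_num) (by norm_num) hkK) hK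
  set T : HN →L[ℂ] HN := (2:ℂ) • B with hT_def
  set s : ℕ → HN := fun j => if j ≤ k then 0
    else ((4:ℂ)^(nn k) * ((4:ℂ)^(nn j))⁻¹) • ((Aop B ^ (nn j - nn k)) (y j)) with hs_def
  have hsb : ∀ j, ‖s j‖ ≤ (if j ≤ k then (0:ℝ) else (2⁻¹)^j) := by
    intro j
    simp only [hs_def]
    by_cases hj : j ≤ k
    · simp [hj]
    · rw [if_neg hj, if_neg hj]
      push_neg at hj
      obtain ⟨c, hc⟩ : ∃ c, nn j = nn k + c := ⟨nn j - nn k, by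
        have := hnn_mono.monotone hj.le; omega⟩
      have hc' : nn j - nn k = c := by omega
      rw [norm_smul, norm_mul, norm_inv, norm_pow, norm_pow,
        norm_Apow B hB0 hB, hc']
      have h44 : ‖(4:ℂ)‖ = 4 := by norm_num
      rw [h44]
      have h1 := hterm k j hj
      have h2 : ‖y j‖ * 2^j ≤ (2:ℝ)^c := by
        have hq : (0:ℝ) < 2^(nn k) := by positivity
        rw [hc, pow_add, mul_assoc] at h1
        exact le_of_mul_le_mul_left h1 hq
      rw [hc, pow_add]
      have heq : (4:ℝ)^(nn k) * ((4:ℝ)^(nn k) * 4^c)⁻¹ * (2^c * ‖y j‖)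
          = ‖y j‖ * 2^c / (4:ℝ)^c := by
        have h4 : (0:ℝ) < 4 ^ (nn k) := by positivity
        field_simp
      rw [heq, h4pow c, inv_pow, div_le_iff₀ (by positivity : (0:ℝ) < 2^c * 2^c)]
      have h3 : ‖y j‖ * 2^c ≤ (2^c / 2^j) * 2^c := by
        apply mul_le_mul_of_nonneg_right _ (le_of_lt (by positivity : (0:ℝ) < 2^c))
        rw [le_div_iff₀ (by positivity : (0:ℝ) < 2^j)]
        linarith [h2]
      calc ‖y j‖ * 2^c ≤ (2^c / 2^j) * 2^c := h3
        _ = ((2:ℝ)^j)⁻¹ * (2^c * 2^c) := by ring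
  have hgb_sum : Summable (fun j : ℕ => if j ≤ k then (0:ℝ) else (2⁻¹)^j) := by
    apply Summable.of_nonneg_of_le (fun j => ?_) (fun j => ?_) hgeom
    · split <;> positivity
    · split
      · positivity
      · exact le_refl _
  have hs_sum : Summable s := Summable.of_norm_bounded hgb_sum hsb
  have hnorm_sum : Summable (fun j => ‖s j‖) :=
    Summable.of_nonneg_of_le (fun j => norm_nonneg _) hsb hgb_sum
  have hR : ‖∑' j, s j‖ ≤ (2⁻¹:ℝ)^k := by
    calc ‖∑' j, s j‖ ≤ ∑' j, ‖s j‖ := norm_tsum_le_tsum_norm hnorm_sum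
      _ ≤ ∑' j, (if j ≤ k then (0:ℝ) else (2⁻¹)^j) := Summable.tsum_le_tsum hsb hnorm_sum hgb_sum
      _ = (2⁻¹:ℝ)^k := geom_tail k
  have hsPM : ∀ j, PM (s j) := by
    intro j
    simp only [hs_def]
    split
    · exact PM_zero
    · rename_i hj
      push_neg at hj
      refine PM_smul _ (PM_Apow_even B hB0 hB ?_ (hyPM j))
      have h1 := hnn_even j
      have h2 := hnn_even k
      have h3 := hnn_mono.monotone hj.le
      rw [Nat.even_iff] at h1 h2 ⊢
      omega
  have hRPM : PM (∑' j, s j) := PM_tsum hs_sum hsPM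
  have hite_sum : Summable (fun j : ℕ => if j = k then y k else 0) :=
    (hasSum_ite_eq k (y k)).summable
  have horb : (T^(nn k)) x = (∑' j, s j) + y k := by
    have hmap : (T^(nn k)) x = ∑' j, (T^(nn k)) (t j) := by
      rw [hx_def]
      exact ContinuousLinearMap.map_tsum _ htsum
    have hterm_eq : ∀ j, (T^(nn k)) (t j) = s j + (if j = k then y k else 0) := by
      intro j
      simp only [ht_def, hs_def, hT_def]
      rw [map_smul]
      rcases lt_trichotomy j k with hjk | rfl | hjk
      · obtain ⟨c, hc⟩ : ∃ c, nn k = c + nn j :=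
          ⟨nn k - nn j, by have := hnn_mono.monotone hjk.le; omega⟩
        have hNc : N j ≤ c := by have := hnnN j k hjk; omega
        rw [hc, pow_add, ContinuousLinearMap.mul_apply, TA_pow B hB0 hB, map_smul,
          T_pow_eq_zero B hB0 hB hNc (hysupp j)]
        rw [if_pos hjk.le, if_neg (Nat.ne_of_lt hjk)]
        simp
      · rw [TA_pow B hB0 hB, smul_smul,
          inv_mul_cancel₀ (pow_ne_zero _ (by norm_num : (4:ℂ) ≠ 0)), one_smul]
        simp
      · rw [T_pow_A_pow B hB0 hB _ _ (hnn_mono.monotone hjk.le), smul_smul]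
        rw [if_neg (by omega), if_neg (by omega)]
        rw [mul_comm]
        simp
    rw [hmap, tsum_congr hterm_eq, Summable.tsum_add hs_sum hite_sum, tsum_ite_eq]
  refine ⟨nn k, ?_, ?_⟩
  · rw [horb]
    exact PM_add hRPM (hyPM k)
  · rw [horb]
    have hsplit : (∑' j, s j) + y k - m = (∑' j, s j) + ((y k - d k) + (d k - m)) := by
      abel
    rw [hsplit]
    have hA : ‖∑' j, s j‖ < ε/4 := hR.trans_lt hhalfk
    have hB2 : ‖y k - d k‖ < ε/4 := (hyclose k).trans hhalfk
    have hC : ‖d k - m‖ < ε/4 := hdk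
    have htri : ‖(∑' j, s j) + ((y k - d k) + (d k - m))‖
        ≤ ‖∑' j, s j‖ + (‖y k - d k‖ + ‖d k - m‖) := by
      calc ‖(∑' j, s j) + ((y k - d k) + (d k - m))‖
          ≤ ‖∑' j, s j‖ + ‖(y k - d k) + (d k - m)‖ := norm_add_le _ _
        _ ≤ ‖∑' j, s j‖ + (‖y k - d k‖ + ‖d k - m‖) := by
            gcongr
            exact norm_add_le _ _
    linarith [htri, hA, hB2, hC]

end Main
section Bs2
variable (B : HN →L[ℂ] HN) (hB0 : B (e 0) = 0) (hB : ∀ n : ℕ, B (e (n + 1)) = e n)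
include hB0 hB

lemma norm_inv4_Apow (n : ℕ) (y : HN) :
    ‖((4:ℂ)^n)⁻¹ • ((Aop B ^ n) y)‖ = ‖y‖ / 2^n := by
  rw [norm_smul, norm_inv, norm_pow, norm_Apow B hB0 hB]
  have h44 : ‖(4:ℂ)‖ = 4 := by norm_num
  rw [h44, show (4:ℝ) = 2 * 2 by norm_num, mul_pow]
  have hp : (0:ℝ) < 2^n := by positivity
  field_simp

lemma main_trans : SubspaceTransitive ((2:ℂ) • B) {z : HN | PM z} := by
  intro U₁ U₂ h₁ h₂ hne₁ hne₂
  obtain ⟨hU₁M, W₁, hW₁o, hU₁⟩ := h₁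
  obtain ⟨hU₂M, W₂, hW₂o, hU₂⟩ := h₂
  obtain ⟨u₁, hu₁⟩ := hne₁
  obtain ⟨u₂, hu₂⟩ := hne₂
  have hu₁M : PM u₁ := hU₁M hu₁
  have hu₂M : PM u₂ := hU₂M hu₂
  have hu₁W : u₁ ∈ W₁ := by rw [hU₁] at hu₁; exact hu₁.1
  have hu₂W : u₂ ∈ W₂ := by rw [hU₂] at hu₂; exact hu₂.1
  obtain ⟨δ₁, hδ₁, hball₁⟩ := Metric.isOpen_iff.1 hW₁o u₁ hu₁W
  obtain ⟨δ₂, hδ₂, hball₂⟩ := Metric.isOpen_iff.1 hW₂o u₂ hu₂W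
  obtain ⟨y₁, N₁, hy₁PM, hy₁supp, hy₁close⟩ := exists_trunc hu₁M (half_pos hδ₁)
  obtain ⟨y₂, N₂, hy₂PM, hy₂supp, hy₂close⟩ := exists_trunc hu₂M (half_pos hδ₂)
  obtain ⟨m0, hm0⟩ := exists_pow_lt_of_lt_one
    (show (0:ℝ) < δ₂/(2*(‖y₁‖+1)) by positivity) (show (2⁻¹:ℝ) < 1 by norm_num)
  set n : ℕ := 2 * (N₂ + m0) with hn_def
  have hn_even : Even n := ⟨N₂ + m0, by omega⟩
  have hnN₂ : N₂ ≤ n := by omega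
  have hnm0 : m0 ≤ n := by omega
  have hsmall : ‖y₁‖ / 2^n < δ₂/2 := by
    have h1 : ((2:ℝ)⁻¹)^n ≤ (2⁻¹)^m0 := pow_le_pow_of_le_one (by norm_num) (by norm_num) hnm0
    have h2 : ‖y₁‖ / 2^n ≤ (‖y₁‖+1) * (2⁻¹)^n := by
      rw [div_eq_mul_inv, ← inv_pow]
      have : ‖y₁‖ ≤ ‖y₁‖ + 1 := by linarith
      exact mul_le_mul_of_nonneg_right this (by positivity)
    have h3 : (‖y₁‖+1) * ((2:ℝ)⁻¹)^n < δ₂/2 := by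
      calc (‖y₁‖+1) * ((2:ℝ)⁻¹)^n ≤ (‖y₁‖+1) * ((2:ℝ)⁻¹)^m0 := by
            exact mul_le_mul_of_nonneg_left h1 (by positivity)
        _ < (‖y₁‖+1) * (δ₂/(2*(‖y₁‖+1))) := by
            exact mul_lt_mul_of_pos_left hm0 (by positivity)
        _ = δ₂/2 := by field_simp
    linarith
  set z : HN := y₂ + ((4:ℂ)^n)⁻¹ • ((Aop B ^ n) y₁) with hz_def
  have hzPM : PM z := PM_add hy₂PM (PM_smul _ (PM_Apow_even B hB0 hB hn_even hy₁PM))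
  have hTz : ((((2:ℂ) • B))^n) z = y₁ := by
    rw [hz_def, map_add, T_pow_eq_zero B hB0 hB hnN₂ hy₂supp, map_smul,
      TA_pow B hB0 hB, smul_smul,
      inv_mul_cancel₀ (pow_ne_zero _ (by norm_num : (4:ℂ) ≠ 0)), one_smul, zero_add]
  have hzu₂ : dist z u₂ < δ₂ := by
    rw [dist_eq_norm]
    have : z - u₂ = (y₂ - u₂) + ((4:ℂ)^n)⁻¹ • ((Aop B ^ n) y₁) := by
      rw [hz_def]; abel
    rw [this]
    calc ‖(y₂ - u₂) + ((4:ℂ)^n)⁻¹ • ((Aop B ^ n) y₁)‖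
        ≤ ‖y₂ - u₂‖ + ‖((4:ℂ)^n)⁻¹ • ((Aop B ^ n) y₁)‖ := norm_add_le _ _
      _ < δ₂/2 + δ₂/2 := by
          rw [norm_inv4_Apow B hB0 hB]
          exact add_lt_add hy₂close hsmall
      _ = δ₂ := by ring
  have hy₁U₁ : y₁ ∈ U₁ := by
    rw [hU₁]
    refine ⟨hball₁ ?_, hy₁PM⟩
    rw [Metric.mem_ball, dist_eq_norm]
    linarith [hy₁close]
  refine ⟨n, (W₂ ∩ (⇑((((2:ℂ) • B))^n)) ⁻¹' W₁) ∩ {z : HN | PM z}, ⟨z, ?_⟩, ?_, ?_⟩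
  · refine ⟨⟨hball₂ hzu₂, ?_⟩, hzPM⟩
    rw [Set.mem_preimage, hTz]
    refine hball₁ ?_
    rw [Metric.mem_ball, dist_eq_norm]
    linarith [hy₁close]
  · exact ⟨Set.inter_subset_right, W₂ ∩ (⇑((((2:ℂ) • B))^n)) ⁻¹' W₁,
      hW₂o.inter (hW₁o.preimage ((((2:ℂ) • B))^n).continuous), rfl⟩
  · rintro v ⟨⟨hvW₂, hvW₁⟩, hvPM⟩
    constructor
    · rw [Set.mem_preimage, hU₁]
      exact ⟨hvW₁, PM_Tpow_even B hB0 hB hn_even hvPM⟩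
    · rw [hU₂]
      exact ⟨hvW₂, hvPM⟩

end Bs2

theorem doubled_backward_shift_M_hypercyclic_but_adjoint_not
    (B : HN →L[ℂ] HN)
    (hB0 : B (e 0) = 0) (hB : ∀ n : ℕ, B (e (n + 1)) = e n)
    (M : Set HN) (hM : M = {x : HN | ∀ n : ℕ, x (2 * n) = 0})
    (Mperp : Set HN) (hMperp : Mperp = {x : HN | ∀ n : ℕ, x (2 * n + 1) = 0}) :
    SubspaceHypercyclic ((2 : ℂ) • B) M ∧
      ¬ SubspaceHypercyclic (ContinuousLinearMap.adjoint ((2 : ℂ) • B)) Mperp ∧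
      ¬ (SubspaceTransitive ((2 : ℂ) • B) M →
          SubspaceTransitive (ContinuousLinearMap.adjoint ((2 : ℂ) • B)) Mperp) := by
  subst hM hMperp
  have hAop : ContinuousLinearMap.adjoint ((2:ℂ) • B) = Aop B := rfl
  have he0norm : ‖e 0‖ = 1 := by rw [e, norm_single']; norm_num
  have he0perp : e 0 ∈ {x : HN | ∀ n : ℕ, x (2 * n + 1) = 0} := fun n => by
    rw [e_apply, if_neg (by omega)]
  have h0perp : (0:HN) ∈ {x : HN | ∀ n : ℕ, x (2 * n + 1) = 0} := fun n => by simp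
  have hApow_norm : ∀ (nt : ℕ) (v : HN),
      ‖((ContinuousLinearMap.adjoint ((2:ℂ) • B))^nt) v‖ = 2^nt * ‖v‖ := by
    intro nt v; rw [hAop]; exact norm_Apow B hB0 hB nt v
  have h2pow_ge : ∀ nt : ℕ, (1:ℝ) ≤ 2^nt := fun nt => one_le_pow₀ (by norm_num)
  refine ⟨?_, ?_, ?_⟩
  · -- M-hypercyclic
    obtain ⟨x, hx⟩ := main_hc B hB0 hB
    refine ⟨x, ?_⟩
    intro m hm
    rw [Metric.mem_closure_iff]
    intro ε hε
    obtain ⟨n, hPMn, hn⟩ := hx m hm ε hε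
    refine ⟨(((2:ℂ) • B)^n) x, ⟨⟨n, rfl⟩, hPMn⟩, ?_⟩
    rw [dist_eq_norm, norm_sub_rev]
    exact hn
  · -- not Mperp-hypercyclic
    rintro ⟨x, hx⟩
    by_cases hx0 : x = 0
    · subst hx0
      have h1 := hx he0perp
      have hsub : (Set.range fun n : ℕ =>
          ((ContinuousLinearMap.adjoint ((2:ℂ) • B))^n) (0:HN))
          ∩ {x : HN | ∀ n : ℕ, x (2 * n + 1) = 0} ⊆ {(0:HN)} := by
        rintro z ⟨⟨n, rfl⟩, _⟩
        simp
      have h2 := closure_minimal hsub isClosed_singleton h1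
      rw [Set.mem_singleton_iff] at h2
      have h3 : (e 0) 0 = 1 := by rw [e_apply, if_pos rfl]
      rw [h2] at h3
      simp at h3
    · have hcl := hx h0perp
      rw [Metric.mem_closure_iff] at hcl
      obtain ⟨b, ⟨⟨n, rfl⟩, _⟩, hb⟩ := hcl ‖x‖ (norm_pos_iff.2 hx0)
      rw [dist_eq_norm, zero_sub, norm_neg, hApow_norm] at hb
      nlinarith [h2pow_ge n, norm_nonneg x, norm_pos_iff.2 hx0]
  · -- not (trans → trans*)
    intro himp
    have htrans2 := himp (main_trans B hB0 hB)
    obtain ⟨n, V, ⟨v, hv⟩, hVrel, hVsub⟩ := htrans2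
      (Metric.ball (0:HN) (1/2) ∩ {x : HN | ∀ n : ℕ, x (2 * n + 1) = 0})
      (Metric.ball (e 0) (1/2) ∩ {x : HN | ∀ n : ℕ, x (2 * n + 1) = 0})
      ⟨Set.inter_subset_right, Metric.ball _ _, Metric.isOpen_ball, rfl⟩
      ⟨Set.inter_subset_right, Metric.ball _ _, Metric.isOpen_ball, rfl⟩
      ⟨0, Metric.mem_ball_self (by norm_num), h0perp⟩
      ⟨e 0, Metric.mem_ball_self (by norm_num), he0perp⟩
    obtain ⟨hv1, hv2⟩ := hVsub hv
    rw [Set.mem_preimage] at hv1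
    have hva : ‖((ContinuousLinearMap.adjoint ((2:ℂ) • B))^n) v‖ < 1/2 := by
      have h5 := hv1.1
      rwa [Metric.mem_ball, dist_zero_right] at h5
    have hvb : 1/2 < ‖v‖ := by
      have h5 := hv2.1
      rw [Metric.mem_ball, dist_eq_norm] at h5
      have habs := abs_norm_sub_norm_le v (e 0)
      have h6 := (abs_le.1 habs).1
      rw [he0norm] at h6
      linarith
    rw [hApow_norm] at hva
    nlinarith [h2pow_ge n, norm_nonneg v]
end
end

section
/- No unilateral forward weighted shift on ℓ²(ℕ) is subspace-hypercyclic: if F is the operator F eₙ = wₙ e_{n+1} with bounded weights (wₙ)ₙ∈ℕ, then for every nontrivial closed subspace M of ℓ²(ℕ) and every x ∈ ℓ²(ℕ), the set Orb(F,x) ∩ M is not dense in M. -/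
open Filter Finset Topology

noncomputable section

local notation "⟪" x ", " y "⟫" => @inner ℂ _ _ x y

lemma phi_apply (j : ℕ) (y : HN) : ⟪e j, y⟫ = y j := by
  simp [e, lp.inner_single_left]

lemma dense_span_e : Dense ((Submodule.span ℂ (Set.range e) : Submodule ℂ HN) : Set HN) := by
  intro f
  have h := lp.hasSum_single (E := fun _ : ℕ => ℂ) (ENNReal.ofNat_ne_top) f
  refine mem_closure_of_tendsto h.tendsto_sum_nat (Filter.Eventually.of_forall ?_)
  intro s
  refine Submodule.sum_mem _ fun i _ => ?_
  have : lp.single (E := fun _ : ℕ => ℂ) 2 i (f i) = f i • e i := by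
    rw [e, ← lp.single_smul]
    norm_num
  rw [this]
  exact Submodule.smul_mem _ _ (Submodule.subset_span ⟨i, rfl⟩)

lemma coord_succ (w : ℕ → ℂ) (F : HN →L[ℂ] HN)
    (hF : ∀ n : ℕ, F (e n) = w n • e (n + 1)) (k : ℕ) (y : HN) :
    F y (k + 1) = w k * y k := by
  have h : (innerSL ℂ (e (k + 1))).comp F = w k • innerSL ℂ (e k) := by
    refine ContinuousLinearMap.ext_on dense_span_e ?_
    rintro _ ⟨n, rfl⟩
    simp only [ContinuousLinearMap.coe_comp', Function.comp_apply, hF n,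
      ContinuousLinearMap.smul_apply, map_smul, smul_eq_mul]
    rw [innerSL_apply_apply, innerSL_apply_apply, phi_apply, phi_apply]
    simp only [e, lp.single_apply]
    rcases eq_or_ne n k with rfl | hne
    · simp
    · rw [Pi.single_eq_of_ne (show k + 1 ≠ n + 1 by omega), Pi.single_eq_of_ne (show k ≠ n by omega)]
      ring
  have := ContinuousLinearMap.ext_iff.mp h y
  simpa [innerSL_apply_apply, phi_apply] using this

lemma coord_zero (w : ℕ → ℂ) (F : HN →L[ℂ] HN)
    (hF : ∀ n : ℕ, F (e n) = w n • e (n + 1)) (y : HN) :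
    F y 0 = 0 := by
  have h : (innerSL ℂ (e 0)).comp F = 0 := by
    refine ContinuousLinearMap.ext_on dense_span_e ?_
    rintro _ ⟨n, rfl⟩
    simp only [ContinuousLinearMap.coe_comp', Function.comp_apply, hF n,
      ContinuousLinearMap.zero_apply, map_smul, smul_eq_mul]
    rw [innerSL_apply_apply, phi_apply]
    simp [e, lp.single_apply]
  have := ContinuousLinearMap.ext_iff.mp h y
  simpa [innerSL_apply_apply, phi_apply] using this

lemma orbit_coord (w : ℕ → ℂ) (F : HN →L[ℂ] HN)
    (hF : ∀ n : ℕ, F (e n) = w n • e (n + 1)) :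
    ∀ (n : ℕ) (x : HN) (k : ℕ), k < n → ((F ^ n) x) k = 0 := by
  intro n
  induction n with
  | zero => intro x k hk; omega
  | succ n ih =>
    intro x k hk
    have hp : (F ^ (n + 1)) x = F ((F ^ n) x) := by
      rw [pow_succ']; rfl
    rw [hp]
    rcases k with _ | k
    · exact coord_zero w F hF _
    · rw [coord_succ w F hF k ((F ^ n) x), ih x k (by omega), mul_zero]

theorem unilateral_forward_shift_never_subspace_hypercyclic
    (w : ℕ → ℂ) (hw_bdd : ∃ C : ℝ, ∀ n, ‖w n‖ ≤ C)
    (F : HN →L[ℂ] HN)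
    (hF : ∀ n : ℕ, F (e n) = w n • e (n + 1))
    (M : Submodule ℂ HN) (hMcl : IsClosed (M : Set HN)) (hM0 : M ≠ ⊥) (hM1 : M ≠ ⊤) :
    ∀ x : HN, ¬ ((M : Set HN) ⊆
        closure ((Set.range fun n : ℕ => (F ^ n) x) ∩ (M : Set HN))) := by
  intro x hsub
  -- pick a nonzero element of M
  obtain ⟨m, hmM, hm0⟩ : ∃ m ∈ M, m ≠ 0 := by
    by_contra h
    push_neg at h
    exact hM0 (by ext y; simpa using ⟨fun hy => h y hy, fun hy => by simp [hy]⟩)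
  -- pick a coordinate where m is nonzero
  obtain ⟨N, hN⟩ : ∃ N, m N ≠ 0 := by
    by_contra h
    push_neg at h
    exact hm0 (by ext i; simpa using h i)
  -- the closed set containing all orbit points
  set T : Set HN :=
    ((fun n : ℕ => (F ^ n) x) '' Set.Iic N) ∪ {y : HN | y N = 0} with hT
  have hTclosed : IsClosed T := by
    refine IsClosed.union ((Set.finite_Iic N).image _).isClosed ?_
    have : {y : HN | y N = 0} = (innerSL ℂ (e N)) ⁻¹' {0} := by
      ext y
      simp [innerSL_apply_apply, phi_apply]
    rw [this]
    exact isClosed_singleton.preimage (innerSL ℂ (e N)).continuous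
  have horb : (Set.range fun n : ℕ => (F ^ n) x) ∩ (M : Set HN) ⊆ T := by
    rintro _ ⟨⟨n, rfl⟩, -⟩
    rcases le_or_gt n N with h | h
    · exact Or.inl ⟨n, h, rfl⟩
    · exact Or.inr (orbit_coord w F hF n x N h)
  have hMT : (M : Set HN) ⊆ T :=
    fun y hy => hTclosed.closure_subset_iff.mpr horb (hsub hy)
  -- all nonzero multiples of m land in the finite part of T
  have hmult : (fun c : ℂ => c • m) '' {c : ℂ | c ≠ 0} ⊆
      (fun n : ℕ => (F ^ n) x) '' Set.Iic N := by
    rintro _ ⟨c, hc, rfl⟩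
    rcases hMT (M.smul_mem c hmM) with h | h
    · exact h
    · exfalso
      have : (c • m) N = c * m N := rfl
      rw [Set.mem_setOf_eq, this] at h
      exact mul_ne_zero hc hN h
  have hinf : ((fun c : ℂ => c • m) '' {c : ℂ | c ≠ 0}).Infinite := by
    refine Set.Infinite.image ?_ ((Set.finite_singleton (0 : ℂ)).infinite_compl)
    exact fun a _ b _ hab => smul_left_injective ℂ hm0 hab
  exact hinf ((((Set.finite_Iic N).image _).subset hmult))
end
end
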